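/- Let (𝒮, 𝒮') be an optimal C_𝒫-correspondence, i.e. 𝒮 ∉ {∅, 𝒫} and φ(𝒮, 𝒮') ≤ φ(𝒯, 𝒯') for every 𝒯 ⊆ 𝒫 with 𝒯 ∉ {∅, 𝒫} and every 𝒯' ⊆ 𝒫'. If (𝒮, 𝒮') is not mutual, then |𝒮| ∈ {1, |𝒫| − 1} or |𝒮'| ∈ {1, |𝒫'| − 1}. -/

import Mathlib

open Finset symmDiff

variable {V : Type*}

/-- `𝒜` is a partition of the finite set `V`: parts are nonempty, pairwise disjoint,
and their union is all of `V`. -/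
def IsPartition [DecidableEq V] [Fintype V] (𝒜 : Finset (Finset V)) : Prop :=
  (∀ P ∈ 𝒜, P.Nonempty) ∧
  (∀ P ∈ 𝒜, ∀ Q ∈ 𝒜, P ≠ Q → Disjoint P Q) ∧
  𝒜.biUnion id = Finset.univ

/-- `φ(𝒮, 𝒮') = |U_𝒮 △ U_𝒮'|`. -/
def phi [DecidableEq V] (𝒮 𝒮' : Finset (Finset V)) : ℕ :=
  ((𝒮.biUnion id) ∆ (𝒮'.biUnion id)).card

/-- A correspondence `(𝒮, 𝒮')` with `𝒮 ⊆ 𝒫`, `𝒮' ⊆ 𝒫'` is mutual if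
(1) `|P ∩ U_{𝒮'}| ≥ |P|/2` for all `P ∈ 𝒮`,
(2) `|P ∩ U_{𝒮'}| ≤ |P|/2` for all `P ∈ 𝒫 \ 𝒮`,
(3) `|P' ∩ U_𝒮| ≥ |P'|/2` for all `P' ∈ 𝒮'`,
(4) `|P' ∩ U_𝒮| ≤ |P'|/2` for all `P' ∈ 𝒫' \ 𝒮'`
(here `𝒜` plays the role of `𝒫` and `ℬ` the role of `𝒫'`). -/
def Mutual [DecidableEq V] (𝒜 ℬ 𝒮 𝒮' : Finset (Finset V)) : Prop :=
  (∀ P ∈ 𝒮, (P.card : ℚ) / 2 ≤ ((P ∩ 𝒮'.biUnion id).card : ℚ)) ∧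
  (∀ P ∈ 𝒜 \ 𝒮, ((P ∩ 𝒮'.biUnion id).card : ℚ) ≤ (P.card : ℚ) / 2) ∧
  (∀ P' ∈ 𝒮', (P'.card : ℚ) / 2 ≤ ((P' ∩ 𝒮.biUnion id).card : ℚ)) ∧
  (∀ P' ∈ ℬ \ 𝒮', ((P' ∩ 𝒮.biUnion id).card : ℚ) ≤ (P'.card : ℚ) / 2)

/-!
Moving a single part `P` into `𝒮` changes `φ` by `|P| - 2 |P ∩ U_{𝒮'}|`, and symmetrically on the
other side. So at an optimum no single move may decrease `φ`, which is exactly mutuality, unless the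
move is not admissible: removing the only part of `𝒮` or adding the last missing part of `𝒜`.
Moves of `𝒮'` are always admissible, so the exception forces `|𝒮| ∈ {1, |𝒜| - 1}`.
-/

theorem Finset.card_symmDiff_add_two_mul_card_inter [DecidableEq V] (X Y : Finset V) :
    #(X ∆ Y) + 2 * #(X ∩ Y) = #X + #Y := by
  have hX := card_sdiff_add_card_inter X Y
  have hY := card_sdiff_add_card_inter Y X
  rw [symmDiff_def, sup_eq_union, card_union_of_disjoint disjoint_sdiff_sdiff, inter_comm Y X] at *
  omega

theorem phi_comm [DecidableEq V] (𝒮 𝒮' : Finset (Finset V)) : phi 𝒮 𝒮' = phi 𝒮' 𝒮 := by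
  rw [phi, phi, symmDiff_comm]

theorem phi_insert_add_two_mul_card_inter [DecidableEq V] {𝒮 : Finset (Finset V)} {P : Finset V}
    (hP : Disjoint P (𝒮.biUnion id)) (𝒮' : Finset (Finset V)) :
    phi (insert P 𝒮) 𝒮' + 2 * #(P ∩ 𝒮'.biUnion id) = phi 𝒮 𝒮' + #P := by
  have h𝒮 := card_symmDiff_add_two_mul_card_inter (𝒮.biUnion id) (𝒮'.biUnion id)
  have hP𝒮 := card_symmDiff_add_two_mul_card_inter (P ∪ 𝒮.biUnion id) (𝒮'.biUnion id)
  rw [card_union_of_disjoint hP, union_inter_distrib_right,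
    card_union_of_disjoint (hP.mono inter_subset_left inter_subset_left)] at hP𝒮
  rw [phi, phi, biUnion_insert, id]
  omega

theorem disjoint_biUnion_of_pairwiseDisjoint [DecidableEq V] {𝒜 𝒮 : Finset (Finset V)}
    {P : Finset V} (h𝒜 : (𝒜 : Set (Finset V)).PairwiseDisjoint id) (hP : P ∈ 𝒜) (hS : 𝒮 ⊆ 𝒜)
    (hPS : P ∉ 𝒮) :
    Disjoint P (𝒮.biUnion id) :=
  (disjoint_biUnion_right _ _ _).2 fun _ hQ => h𝒜 hP (hS hQ) (ne_of_mem_of_not_mem hQ hPS).symm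

theorem IsPartition.pairwiseDisjoint [DecidableEq V] [Fintype V] {𝒜 : Finset (Finset V)}
    (h : IsPartition 𝒜) : (𝒜 : Set (Finset V)).PairwiseDisjoint id :=
  fun _ hP _ hQ hPQ => h.2.1 _ hP _ hQ hPQ

theorem two_mul_card_inter_le_of_phi_le_phi_insert [DecidableEq V]
    {𝒮 𝒮' : Finset (Finset V)} {P : Finset V} (hP : Disjoint P (𝒮.biUnion id))
    (hle : phi 𝒮 𝒮' ≤ phi (insert P 𝒮) 𝒮') : 2 * #(P ∩ 𝒮'.biUnion id) ≤ #P := by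
  have := phi_insert_add_two_mul_card_inter hP 𝒮'
  omega

theorem le_two_mul_card_inter_of_phi_le_phi_erase [DecidableEq V]
    {𝒮 𝒮' : Finset (Finset V)} {P : Finset V} (h𝒮 : (𝒮 : Set (Finset V)).PairwiseDisjoint id)
    (hP : P ∈ 𝒮) (hle : phi 𝒮 𝒮' ≤ phi (𝒮.erase P) 𝒮') : #P ≤ 2 * #(P ∩ 𝒮'.biUnion id) := by
  have := phi_insert_add_two_mul_card_inter
    (disjoint_biUnion_of_pairwiseDisjoint h𝒮 hP (erase_subset P 𝒮) (notMem_erase P 𝒮)) 𝒮'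
  rw [insert_erase hP] at this
  omega

theorem half_le_iff_le_two_mul (p c : ℕ) : (p : ℚ) / 2 ≤ c ↔ p ≤ 2 * c := by
  rw [div_le_iff₀ two_pos, mul_comm]; exact_mod_cast Iff.rfl

theorem le_half_iff_two_mul_le (p c : ℕ) : (c : ℚ) ≤ p / 2 ↔ 2 * c ≤ p := by
  rw [le_div_iff₀ two_pos, mul_comm]; exact_mod_cast Iff.rfl

section Optimal

variable [DecidableEq V] {𝒜 ℬ 𝒮 𝒮' : Finset (Finset V)}
  (h𝒜 : (𝒜 : Set (Finset V)).PairwiseDisjoint id) (hℬ : (ℬ : Set (Finset V)).PairwiseDisjoint id)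
  (hS : 𝒮 ⊆ 𝒜) (hS' : 𝒮' ⊆ ℬ) (hne : 𝒮 ≠ ∅) (hnP : 𝒮 ≠ 𝒜)
  (hopt : ∀ 𝒯 ⊆ 𝒜, 𝒯 ≠ ∅ → 𝒯 ≠ 𝒜 → ∀ 𝒯' ⊆ ℬ, phi 𝒮 𝒮' ≤ phi 𝒯 𝒯')
include h𝒜 hℬ hS hS' hne hnP hopt

theorem mutual_of_optimal (h1 : #𝒮 ≠ 1) (h2 : #𝒮 ≠ #𝒜 - 1) : Mutual 𝒜 ℬ 𝒮 𝒮' := by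
  refine ⟨fun P hP => ?_, fun P hP => ?_, fun P' hP' => ?_, fun P' hP' => ?_⟩
  · rw [half_le_iff_le_two_mul]
    have h𝒮P : (𝒮.erase P).Nonempty := by
      rw [← card_pos, card_erase_of_mem hP]
      have := card_pos.2 ⟨P, hP⟩
      omega
    exact le_two_mul_card_inter_of_phi_le_phi_erase (h𝒜.subset hS) hP
      (hopt _ ((erase_subset P 𝒮).trans hS) h𝒮P.ne_empty
        (fun h => notMem_erase P 𝒮 (h ▸ hS hP)) 𝒮' hS')
  · obtain ⟨hP𝒜, hP𝒮⟩ := mem_sdiff.1 hP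
    rw [le_half_iff_two_mul_le]
    refine two_mul_card_inter_le_of_phi_le_phi_insert
      (disjoint_biUnion_of_pairwiseDisjoint h𝒜 hP𝒜 hS hP𝒮)
      (hopt _ (insert_subset hP𝒜 hS) (insert_ne_empty P 𝒮) (fun h => h2 ?_) 𝒮' hS')
    have := card_insert_of_notMem hP𝒮
    rw [h] at this
    omega
  · rw [half_le_iff_le_two_mul]
    refine le_two_mul_card_inter_of_phi_le_phi_erase (hℬ.subset hS') hP' ?_
    rw [phi_comm, phi_comm _ 𝒮]
    exact hopt 𝒮 hS hne hnP _ ((erase_subset P' 𝒮').trans hS')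
  · obtain ⟨hP'ℬ, hP'𝒮'⟩ := mem_sdiff.1 hP'
    rw [le_half_iff_two_mul_le]
    refine two_mul_card_inter_le_of_phi_le_phi_insert
      (disjoint_biUnion_of_pairwiseDisjoint hℬ hP'ℬ hS' hP'𝒮') ?_
    rw [phi_comm, phi_comm _ 𝒮]
    exact hopt 𝒮 hS hne hnP _ (insert_subset hP'ℬ hS')

end Optimal

/-- if `(𝒮, 𝒮')` is an optimal `C_𝒫`-correspondence (i.e.
`𝒮 ∉ {∅, 𝒫}` and `φ(𝒮, 𝒮') ≤ φ(𝒯, 𝒯')` for all `𝒯 ⊆ 𝒫` with `𝒯 ∉ {∅, 𝒫}` and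
all `𝒯' ⊆ 𝒫'`) which is not mutual, then `|𝒮| ∈ {1, |𝒫| − 1}` or
`|𝒮'| ∈ {1, |𝒫'| − 1}` (here `𝒜` plays the role of `𝒫` and `ℬ` the role of `𝒫'`). -/
theorem stmt17 [DecidableEq V] [Fintype V] (𝒜 ℬ : Finset (Finset V))
    (hA : IsPartition 𝒜) (hB : IsPartition ℬ)
    (𝒮 𝒮' : Finset (Finset V)) (hS : 𝒮 ⊆ 𝒜) (hS' : 𝒮' ⊆ ℬ)
    (hne : 𝒮 ≠ ∅) (hnP : 𝒮 ≠ 𝒜)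
    (hopt : ∀ 𝒯 ⊆ 𝒜, 𝒯 ≠ ∅ → 𝒯 ≠ 𝒜 → ∀ 𝒯' ⊆ ℬ, phi 𝒮 𝒮' ≤ phi 𝒯 𝒯')
    (hnm : ¬ Mutual 𝒜 ℬ 𝒮 𝒮') :
    (𝒮.card = 1 ∨ 𝒮.card = 𝒜.card - 1) ∨
    (𝒮'.card = 1 ∨ 𝒮'.card = ℬ.card - 1) := by
  refine .inl (or_iff_not_and_not.2 fun h => hnm ?_)
  exact mutual_of_optimal hA.pairwiseDisjoint hB.pairwiseDisjoint hS hS' hne hnP hopt h.1 h.2
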